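/- For all natural numbers l, m and all indices 0 ≤ i ≤ l, 0 ≤ a ≤ m, the operator C on V_l⊗V_m satisfies C(v_i^{(l)}⊗v_a^{(m)}) = −( l(l+2)/8 + 5m(m+2)/8 − (2i−l)(2a−m)/4 )·v_i^{(l)}⊗v_a^{(m)} + (1/2)√((i+1)(l−i)a(m−a+1))·v_{i+1}^{(l)}⊗v_{a−1}^{(m)} + (1/2)√(i(l−i+1)(a+1)(m−a))·v_{i−1}^{(l)}⊗v_{a+1}^{(m)}, where any term whose index lies outside the range [0,l] or [0,m] has vanishing coefficient. -/

import Mathlib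

/-!
With `E = z₀∂₁`, `F = z₁∂₀` and `H = z₀∂₀ − z₁∂₁` one has `D(X₁) = (i/2)H`,
`D(X₂) = (E − F)/2` and `D(X₃) = (i/2)(E + F)`. Hence `Σ D(X_r)² = −H²/4 − (EF + FE)/2`,
which is the scalar `−n(n+2)/4` on polynomials of degree `n`, and
`Σ D(X_r) ⊗ D(X_r) = −H⊗H/4 − (E⊗F + F⊗E)/2`. On the basis `v_k` the operator `H` is diagonal
with eigenvalue `n − 2k`, while the normalization `√(k!(n−k)!)` turns `E` and `F` into the
ladder operators `E v_k = √(k(n−k+1)) v_{k−1}` and `F v_k = √((k+1)(n−k)) v_{k+1}`.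
-/

open MvPolynomial TensorProduct

noncomputable section

abbrev Mat2 : Type := Matrix (Fin 2) (Fin 2) ℂ

abbrev P2 : Type := MvPolynomial (Fin 2) ℂ

/-- The derived action D_n(X) f := u₀·∂f/∂z₀ + u₁·∂f/∂z₁ with (u₀,u₁) = (z₀,z₁)X. -/
def Dop (g : Mat2) : P2 →ₗ[ℂ] P2 :=
  ∑ j : Fin 2,
    (LinearMap.mulLeft ℂ (∑ i : Fin 2, MvPolynomial.C (g i j) * MvPolynomial.X i)).comp
      (MvPolynomial.pderiv j).toLinearMap

/-- The standard basis X₁, X₂, X₃ of su(2). -/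
def Xsu : Fin 3 → Mat2 :=
  ![(1 / 2 : ℂ) • !![Complex.I, 0; 0, -Complex.I],
    (1 / 2 : ℂ) • !![0, 1; -1, 0],
    (1 / 2 : ℂ) • !![0, Complex.I; Complex.I, 0]]

/-- D(X)⊗id on P2 ⊗ P2. -/
def lten (f : P2 →ₗ[ℂ] P2) : P2 ⊗[ℂ] P2 →ₗ[ℂ] P2 ⊗[ℂ] P2 :=
  TensorProduct.map f LinearMap.id

/-- id⊗D(X) on P2 ⊗ P2. -/
def rten (f : P2 →ₗ[ℂ] P2) : P2 ⊗[ℂ] P2 →ₗ[ℂ] P2 ⊗[ℂ] P2 :=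
  TensorProduct.map LinearMap.id f

/-- The Casimir-type operator C. -/
def CasOp : P2 ⊗[ℂ] P2 →ₗ[ℂ] P2 ⊗[ℂ] P2 :=
  (1 / 2 : ℂ) • (∑ r : Fin 3, lten (Dop (Xsu r)) ∘ₗ lten (Dop (Xsu r)))
    + (5 / 2 : ℂ) • (∑ r : Fin 3, rten (Dop (Xsu r)) ∘ₗ rten (Dop (Xsu r)))
    - ∑ r : Fin 3, lten (Dop (Xsu r)) ∘ₗ rten (Dop (Xsu r))

/-- The normalized basis vector v_k^{(n)} = z₀^{n−k} z₁^{k} / √(k!(n−k)!). -/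
def vb (n k : ℕ) : P2 :=
  ((Real.sqrt ((k.factorial * (n - k).factorial : ℕ) : ℝ) : ℂ))⁻¹
    • (X 0 ^ (n - k) * X 1 ^ k : P2)

def mulXPDeriv (i j : Fin 2) : P2 →ₗ[ℂ] P2 :=
  LinearMap.mulLeft ℂ (X i) ∘ₗ (pderiv j).toLinearMap

local notation "E" => mulXPDeriv 0 1
local notation "F" => mulXPDeriv 1 0
local notation "H" => mulXPDeriv 0 0 - mulXPDeriv 1 1

lemma Dop_eq_sum (g : Mat2) : Dop g = ∑ i, ∑ j, g i j • mulXPDeriv i j := by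
  rw [Finset.sum_comm]
  refine Finset.sum_congr rfl fun j _ => LinearMap.ext fun f => ?_
  simp [mulXPDeriv, smul_eq_C_mul]
  ring

lemma Dop_Xsu_zero : Dop (Xsu 0) = (Complex.I / 2) • H := by
  rw [Dop_eq_sum]; simp [Xsu, Fin.sum_univ_two, smul_sub]; module

lemma Dop_Xsu_one : Dop (Xsu 1) = (1 / 2 : ℂ) • (E - F) := by
  rw [Dop_eq_sum]; simp [Xsu, Fin.sum_univ_two, smul_sub]; module

lemma Dop_Xsu_two : Dop (Xsu 2) = (Complex.I / 2) • (E + F) := by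
  rw [Dop_eq_sum]; simp [Xsu, Fin.sum_univ_two]; module

section Monomial

variable (p q : ℕ)

lemma mulXPDeriv_zero_zero_monomial :
    mulXPDeriv 0 0 (X 0 ^ p * X 1 ^ q) = (p : ℂ) • (X 0 ^ p * X 1 ^ q : P2) := by
  cases p <;> simp [mulXPDeriv, smul_eq_C_mul]
  ring

lemma mulXPDeriv_one_one_monomial :
    mulXPDeriv 1 1 (X 0 ^ p * X 1 ^ q) = (q : ℂ) • (X 0 ^ p * X 1 ^ q : P2) := by
  cases q <;> simp [mulXPDeriv, smul_eq_C_mul]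
  ring

lemma mulXPDeriv_zero_one_monomial :
    mulXPDeriv 0 1 (X 0 ^ p * X 1 ^ q) = (q : ℂ) • (X 0 ^ (p + 1) * X 1 ^ (q - 1) : P2) := by
  simp [mulXPDeriv, smul_eq_C_mul]; ring

lemma mulXPDeriv_one_zero_monomial :
    mulXPDeriv 1 0 (X 0 ^ p * X 1 ^ q) = (p : ℂ) • (X 0 ^ (p - 1) * X 1 ^ (q + 1) : P2) := by
  simp [mulXPDeriv, smul_eq_C_mul]; ring

end Monomial

lemma inv_sqrt_factorial_mul_succ (p q : ℕ) :
    (√(((q + 1).factorial * p.factorial : ℕ) : ℝ))⁻¹ * ((q : ℝ) + 1)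
      = √(((q : ℝ) + 1) * ((p : ℝ) + 1))
          * (√((q.factorial * (p + 1).factorial : ℕ) : ℝ))⁻¹ := by
  have hpos : ∀ a b : ℕ, 0 < √((a.factorial * b.factorial : ℕ) : ℝ) := fun a b =>
    Real.sqrt_pos.2 (by positivity)
  have hsq : ((q : ℝ) + 1) * √((q.factorial * (p + 1).factorial : ℕ) : ℝ)
      = √(((q : ℝ) + 1) ^ 2 * (q.factorial * (p + 1).factorial : ℕ)) := by
    rw [Real.sqrt_mul (sq_nonneg _), Real.sqrt_sq (by positivity)]
  rw [inv_mul_eq_div, ← div_eq_mul_inv, div_eq_div_iff (hpos _ _).ne' (hpos _ _).ne', hsq,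
    ← Real.sqrt_mul (by positivity)]
  congr 1
  push_cast [Nat.factorial_succ]
  ring

lemma mulXPDeriv_zero_one_vb {n k : ℕ} (hk : k ≤ n) :
    E (vb n k) = (√((k : ℝ) * ((n : ℝ) - k + 1)) : ℂ) • vb n (k - 1) := by
  obtain ⟨r, rfl⟩ := Nat.exists_eq_add_of_le hk
  cases k with
  | zero => simp only [vb, map_smul, mulXPDeriv_zero_one_monomial]; simp
  | succ q =>
    have hr : q + 1 + r - q = r + 1 := by omega
    simp only [vb, map_smul, mulXPDeriv_zero_one_monomial, smul_smul, Nat.add_sub_cancel_left,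
      Nat.add_sub_cancel, hr]
    congr 1
    rw [show ((q + 1 + r : ℕ) : ℝ) - (q + 1 : ℕ) + 1 = r + 1 by push_cast; ring]
    exact_mod_cast inv_sqrt_factorial_mul_succ r q

lemma mulXPDeriv_one_zero_vb {n k : ℕ} (hk : k ≤ n) :
    F (vb n k) = (√(((k : ℝ) + 1) * ((n : ℝ) - k)) : ℂ) • vb n (k + 1) := by
  obtain ⟨r, rfl⟩ := Nat.exists_eq_add_of_le hk
  cases r with
  | zero => simp only [vb, map_smul, mulXPDeriv_one_zero_monomial]; simp
  | succ p =>
    have hp : k + (p + 1) - (k + 1) = p := by omega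
    simp only [vb, map_smul, mulXPDeriv_one_zero_monomial, smul_smul, Nat.add_sub_cancel_left,
      Nat.add_sub_cancel, hp]
    congr 1
    rw [show ((k + (p + 1) : ℕ) : ℝ) - k = p + 1 by push_cast; ring, mul_comm k.factorial,
      mul_comm (k + 1).factorial, mul_comm ((k : ℝ) + 1)]
    exact_mod_cast inv_sqrt_factorial_mul_succ k p

lemma mulXPDeriv_zero_zero_vb (n k : ℕ) :
    mulXPDeriv 0 0 (vb n k) = ((n - k : ℕ) : ℂ) • vb n k := by
  rw [vb, map_smul, mulXPDeriv_zero_zero_monomial, smul_comm]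

lemma mulXPDeriv_one_one_vb (n k : ℕ) : mulXPDeriv 1 1 (vb n k) = (k : ℂ) • vb n k := by
  rw [vb, map_smul, mulXPDeriv_one_one_monomial, smul_comm]

def casimir : P2 →ₗ[ℂ] P2 := ∑ r : Fin 3, Dop (Xsu r) ∘ₗ Dop (Xsu r)

lemma casimir_eq : casimir = (-1 / 4 : ℂ) • (H ∘ₗ H) - (1 / 2 : ℂ) • (E ∘ₗ F + F ∘ₗ E) := by
  simp only [casimir, Fin.sum_univ_three, Dop_Xsu_zero, Dop_Xsu_one, Dop_Xsu_two,
    LinearMap.smul_comp, LinearMap.comp_smul, smul_smul, div_mul_div_comm, Complex.I_mul_I]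
  simp only [LinearMap.sub_comp, LinearMap.comp_sub, LinearMap.add_comp, LinearMap.comp_add]
  module

lemma casimir_monomial (p q : ℕ) :
    casimir (X 0 ^ p * X 1 ^ q)
      = (-((p + q) * (p + q + 2) / 4 : ℂ)) • (X 0 ^ p * X 1 ^ q : P2) := by
  rw [casimir_eq]
  cases p <;> cases q <;>
    simp only [LinearMap.sub_apply, LinearMap.add_apply, LinearMap.smul_apply,
      LinearMap.comp_apply, map_sub, map_smul, map_zero, mulXPDeriv_zero_zero_monomial,
      mulXPDeriv_one_one_monomial, mulXPDeriv_zero_one_monomial, mulXPDeriv_one_zero_monomial,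
      Nat.add_sub_cancel, CharP.cast_eq_zero, zero_smul] <;>
    push_cast <;> module

lemma sum_Dop_Xsu_tmul (x y : P2) :
    ∑ r : Fin 3, Dop (Xsu r) x ⊗ₜ[ℂ] Dop (Xsu r) y
      = (-1 / 4 : ℂ) • (H x ⊗ₜ[ℂ] H y)
        - (1 / 2 : ℂ) • (E x ⊗ₜ[ℂ] F y + F x ⊗ₜ[ℂ] E y) := by
  simp only [Fin.sum_univ_three, Dop_Xsu_zero, Dop_Xsu_one, Dop_Xsu_two, LinearMap.smul_apply,
    smul_tmul_smul, div_mul_div_comm, Complex.I_mul_I]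
  simp only [LinearMap.sub_apply, LinearMap.add_apply, tmul_sub, sub_tmul, tmul_add, add_tmul]
  module

lemma CasOp_tmul (x y : P2) :
    CasOp (x ⊗ₜ[ℂ] y)
      = (1 / 2 : ℂ) • (casimir x ⊗ₜ[ℂ] y) + (5 / 2 : ℂ) • (x ⊗ₜ[ℂ] casimir y)
      + (1 / 4 : ℂ) • (H x ⊗ₜ[ℂ] H y)
      + (1 / 2 : ℂ) • (E x ⊗ₜ[ℂ] F y + F x ⊗ₜ[ℂ] E y) := by
  have hcas (z : P2) : casimir z = ∑ r : Fin 3, Dop (Xsu r) (Dop (Xsu r) z) := by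
    simp [casimir]
  simp only [CasOp, lten, rten, hcas, LinearMap.sub_apply, LinearMap.add_apply,
    LinearMap.smul_apply, LinearMap.sum_apply, LinearMap.comp_apply, map_tmul, LinearMap.id_apply,
    ← sum_tmul, ← tmul_sum, sum_Dop_Xsu_tmul]
  module

lemma casimir_vb {n k : ℕ} (hk : k ≤ n) :
    casimir (vb n k) = (-(n * (n + 2) / 4 : ℂ)) • vb n k := by
  rw [vb, map_smul, casimir_monomial, smul_comm]
  push_cast [Nat.cast_sub hk]
  ring_nf

theorem statement4 (l m i a : ℕ) (hi : i ≤ l) (ha : a ≤ m) :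
    CasOp (vb l i ⊗ₜ[ℂ] vb m a)
      = -(((l : ℂ) * ((l : ℂ) + 2) / 8 + 5 * (m : ℂ) * ((m : ℂ) + 2) / 8
            - (2 * (i : ℂ) - (l : ℂ)) * (2 * (a : ℂ) - (m : ℂ)) / 4))
          • (vb l i ⊗ₜ[ℂ] vb m a)
        + (((1 / 2 : ℝ) * Real.sqrt (((i : ℝ) + 1) * ((l : ℝ) - (i : ℝ)) * (a : ℝ)
              * ((m : ℝ) - (a : ℝ) + 1)) : ℝ) : ℂ)
          • (vb l (i + 1) ⊗ₜ[ℂ] vb m (a - 1))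
        + (((1 / 2 : ℝ) * Real.sqrt ((i : ℝ) * ((l : ℝ) - (i : ℝ) + 1) * ((a : ℝ) + 1)
              * ((m : ℝ) - (a : ℝ))) : ℝ) : ℂ)
          • (vb l (i - 1) ⊗ₜ[ℂ] vb m (a + 1)) := by
  have hli : (0 : ℝ) ≤ l - i := sub_nonneg.2 (Nat.cast_le.2 hi)
  rw [CasOp_tmul, casimir_vb hi, casimir_vb ha]
  simp only [LinearMap.sub_apply, mulXPDeriv_zero_zero_vb, mulXPDeriv_one_one_vb,
    mulXPDeriv_zero_one_vb hi, mulXPDeriv_one_zero_vb hi, mulXPDeriv_zero_one_vb ha,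
    mulXPDeriv_one_zero_vb ha, ← sub_smul, ← smul_tmul', tmul_smul, smul_smul, smul_add]
  match_scalars
  · push_cast [Nat.cast_sub hi, Nat.cast_sub ha]
    ring
  · rw [mul_assoc _ ((a : ℝ) + 1), Real.sqrt_mul (mul_nonneg (Nat.cast_nonneg i) (by linarith))]
    push_cast
    ring
  · rw [mul_assoc _ (a : ℝ), Real.sqrt_mul (mul_nonneg (by positivity) hli)]
    push_cast
    ring

end
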